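/- arXiv:math/0607380 — 4 statements merged into one kernel-verified Lean document; each statement's English description precedes it below -/
import Mathlib

section
/- Let C be a convex cone in (ℝ≥0)^n (closed under addition and scaling by nonnegative reals) that spans ℝ^n as a vector space and is not closed in the usual topology of ℝ^n. Then the monoid M(C) = C ∩ ℕ^n of integer vectors of C has infinitely many irreducible elements. -/
open Filter Topology Set

private lemma stmt0_seqclosed_aux {n : ℕ} {H : Set (Fin n → ℝ)} (hH : IsCompact H) :
    IsClosed {x : Fin n → ℝ | 0 ≤ ∑ i, x i ∧ ∃ y ∈ H, x = (∑ i, x i) • y} := by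
  have hσ : Continuous fun z : Fin n → ℝ => ∑ i, z i :=
    continuous_finset_sum _ fun i _ => continuous_apply i
  apply IsSeqClosed.isClosed
  intro x p hx hlim
  choose y hyH hxy using fun k => (hx k).2
  obtain ⟨a, haH, φ, hφ, hya⟩ := hH.tendsto_subseq hyH
  have hσlim : Tendsto (fun k => ∑ i, x k i) atTop (𝓝 (∑ i, p i)) := (hσ.tendsto p).comp hlim
  constructor
  · exact ge_of_tendsto' hσlim fun k => (hx k).1
  · refine ⟨a, haH, ?_⟩
    have h1 : Tendsto (fun k => x (φ k)) atTop (𝓝 p) := hlim.comp hφ.tendsto_atTop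
    have h2 : Tendsto (fun k => (∑ i, x (φ k) i) • y (φ k)) atTop (𝓝 ((∑ i, p i) • a)) :=
      Tendsto.smul ((hσ.tendsto p).comp h1) hya
    have h3 : (fun k => (∑ i, x (φ k) i) • y (φ k)) = fun k => x (φ k) :=
      funext fun k => (hxy (φ k)).symm
    rw [h3] at h2
    exact tendsto_nhds_unique h1 h2

/-- A convex cone in (ℝ≥0)^n spanning ℝ^n and not closed has an
integral cone with infinitely many irreducible elements. -/
theorem stmt_0 (n : ℕ) (C : Set (Fin n → ℝ))
    (hpos : ∀ u ∈ C, ∀ i, 0 ≤ u i)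
    (hcone : ∀ u ∈ C, ∀ v ∈ C, ∀ a b : ℝ, 0 ≤ a → 0 ≤ b → a • u + b • v ∈ C)
    (hspan : Submodule.span ℝ C = ⊤)
    (hnotclosed : ¬ IsClosed C) :
    {u : Fin n → ℕ | (fun i => (u i : ℝ)) ∈ C ∧ u ≠ 0 ∧
      ¬ ∃ v w : Fin n → ℕ, (fun i => (v i : ℝ)) ∈ C ∧ (fun i => (w i : ℝ)) ∈ C ∧
        v ≠ 0 ∧ w ≠ 0 ∧ u = v + w}.Infinite := by
  classical
  by_contra hfin
  rw [Set.not_infinite] at hfin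
  set Irr : Set (Fin n → ℕ) := {u : Fin n → ℕ | (fun i => (u i : ℝ)) ∈ C ∧ u ≠ 0 ∧
      ¬ ∃ v w : Fin n → ℕ, (fun i => (v i : ℝ)) ∈ C ∧ (fun i => (w i : ℝ)) ∈ C ∧
        v ≠ 0 ∧ w ≠ 0 ∧ u = v + w} with hIrrdef
  -- sum computation lemmas
  have hadd' : ∀ x z : Fin n → ℝ, (∑ i, (x + z) i) = (∑ i, x i) + (∑ i, z i) := by
    intro x z; simp [Finset.sum_add_distrib]
  have hsmul' : ∀ (c : ℝ) (x : Fin n → ℝ), (∑ i, (c • x) i) = c * ∑ i, x i := by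
    intro c x; simp [Finset.mul_sum]
  -- basic facts about C
  have hCne : C.Nonempty := by
    by_contra h
    rw [Set.not_nonempty_iff_eq_empty] at h
    exact hnotclosed (h ▸ isClosed_empty)
  obtain ⟨c₀, hc₀⟩ := hCne
  have h0C : (0 : Fin n → ℝ) ∈ C := by
    have := hcone c₀ hc₀ c₀ hc₀ 0 0 le_rfl le_rfl
    simpa using this
  have hconv : Convex ℝ C := fun u hu v hv a b ha hb _ => hcone u hu v hv a b ha hb
  have hsumnn : ∀ x ∈ C, 0 ≤ ∑ i, x i := fun x hx => Finset.sum_nonneg fun i _ => hpos x hx i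
  have hsumpos : ∀ x ∈ C, x ≠ 0 → 0 < ∑ i, x i := by
    intro x hx hx0
    rcases (hsumnn x hx).lt_or_eq with h | h
    · exact h
    · exfalso
      apply hx0
      funext i
      exact (Finset.sum_eq_zero_iff_of_nonneg (fun i _ => hpos x hx i)).mp h.symm i
        (Finset.mem_univ i)
  -- the finite generating data
  set S : Set (Fin n → ℝ) := (fun u : Fin n → ℕ => fun i => (u i : ℝ)) '' Irr with hSdef
  have hSC : S ⊆ C := by
    rintro s ⟨u, hu, rfl⟩
    exact hu.1
  set T : Set (Fin n → ℝ) := (fun s => (∑ i, s i)⁻¹ • s) '' (S \ {0}) with hTdef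
  have hTC : T ⊆ C := by
    rintro t ⟨s, ⟨hsS, _⟩, rfl⟩
    have := hcone s (hSC hsS) s (hSC hsS) (∑ i, s i)⁻¹ 0
      (inv_nonneg.mpr (hsumnn s (hSC hsS))) le_rfl
    simpa using this
  set H : Set (Fin n → ℝ) := convexHull ℝ T with hHdef
  have hHC : H ⊆ C := convexHull_min hTC hconv
  have hHcompact : IsCompact H := by
    apply Set.Finite.isCompact_convexHull
    exact ((hfin.image _).diff).image _
  set K : Set (Fin n → ℝ) :=
    {0} ∪ {x | 0 ≤ ∑ i, x i ∧ ∃ y ∈ H, x = (∑ i, x i) • y} with hKdef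
  have hKclosed : IsClosed K := isClosed_singleton.union (stmt0_seqclosed_aux hHcompact)
  have hK0 : (0 : Fin n → ℝ) ∈ K := Or.inl rfl
  have hKC : K ⊆ C := by
    rintro x (hx | ⟨hx1, y, hyH, hxy⟩)
    · simp only [Set.mem_singleton_iff] at hx
      exact hx ▸ h0C
    · rw [hxy]
      have := hcone y (hHC hyH) y (hHC hyH) (∑ i, x i) 0 hx1 le_rfl
      simpa using this
  have hKsmul : ∀ x ∈ K, ∀ c : ℝ, 0 ≤ c → c • x ∈ K := by
    rintro x (hx | ⟨hx1, y, hyH, hxy⟩) c hc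
    · simp only [Set.mem_singleton_iff] at hx
      subst hx
      simpa using hK0
    · right
      refine ⟨?_, y, hyH, ?_⟩
      · rw [hsmul']
        exact mul_nonneg hc hx1
      · rw [hsmul']
        conv_lhs => rw [hxy]
        rw [smul_smul]
  have hKadd : ∀ x ∈ K, ∀ z ∈ K, x + z ∈ K := by
    rintro x hxK z hzK
    rcases hxK with hx | ⟨hx1, y₁, hy₁H, hxy₁⟩
    · simp only [Set.mem_singleton_iff] at hx
      subst hx
      simpa using hzK
    rcases hzK with hz | ⟨hz1, y₂, hy₂H, hzy₂⟩
    · simp only [Set.mem_singleton_iff] at hz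
      subst hz
      right
      simpa using ⟨hx1, y₁, hy₁H, hxy₁⟩
    · set a : ℝ := ∑ i, x i with hadef
      set b : ℝ := ∑ i, z i with hbdef
      by_cases hs0 : a + b = 0
      · have ha0 : a = 0 := le_antisymm (by linarith) hx1
        have hb0 : b = 0 := le_antisymm (by linarith) hz1
        have hx0 : x = 0 := by rw [hxy₁, ha0, zero_smul]
        have hz0 : z = 0 := by rw [hzy₂, hb0, zero_smul]
        rw [hx0, hz0, add_zero]
        exact hK0
      · have hspos : 0 < a + b := lt_of_le_of_ne (by linarith) (Ne.symm hs0)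
        right
        have hy : (a / (a + b)) • y₁ + (b / (a + b)) • y₂ ∈ H :=
          (convex_convexHull ℝ T) hy₁H hy₂H (div_nonneg hx1 hspos.le)
            (div_nonneg hz1 hspos.le) (by field_simp)
        refine ⟨?_, (a / (a + b)) • y₁ + (b / (a + b)) • y₂, hy, ?_⟩
        · rw [hadd']
          exact hspos.le
        · rw [hadd', ← hadef, ← hbdef, smul_add, smul_smul, smul_smul,
            mul_div_cancel₀ a hs0, mul_div_cancel₀ b hs0, ← hxy₁, ← hzy₂]
  have hSK : S ⊆ K := by
    intro s hsS
    by_cases hs0 : s = 0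
    · exact hs0 ▸ hK0
    · right
      have hsC := hSC hsS
      have hσs : 0 < ∑ i, s i := hsumpos s hsC hs0
      refine ⟨hsumnn s hsC, (∑ i, s i)⁻¹ • s, subset_convexHull ℝ T ⟨s, ⟨hsS, hs0⟩, rfl⟩, ?_⟩
      rw [smul_smul, mul_inv_cancel₀ hσs.ne', one_smul]
  -- nonzero integer points of C lie in K
  have hMK : ∀ u : Fin n → ℕ, (fun i => (u i : ℝ)) ∈ C → u ≠ 0 → (fun i => (u i : ℝ)) ∈ K := by
    have hposum : ∀ z : Fin n → ℕ, z ≠ 0 → 0 < ∑ i, z i := by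
      intro z hz
      rcases Function.ne_iff.mp hz with ⟨i, hi⟩
      exact Finset.sum_pos' (fun j _ => Nat.zero_le _)
        ⟨i, Finset.mem_univ i, Nat.pos_of_ne_zero (by simpa using hi)⟩
    have key : ∀ N : ℕ, ∀ u : Fin n → ℕ, (∑ i, u i) = N →
        (fun i => (u i : ℝ)) ∈ C → u ≠ 0 → (fun i => (u i : ℝ)) ∈ K := by
      intro N
      induction N using Nat.strong_induction_on with
      | _ N ih =>
        intro u hsum huC hu0
        by_cases hirr : u ∈ Irr
        · exact hSK ⟨u, hirr, rfl⟩
        · rw [hIrrdef] at hirr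
          simp only [Set.mem_setOf_eq, not_and, not_not] at hirr
          obtain ⟨v, w, hvC, hwC, hv0, hw0, huvw⟩ := hirr huC hu0
          have hsumvw : (∑ i, v i) + (∑ i, w i) = N := by
            rw [← hsum, huvw, ← Finset.sum_add_distrib]
            rfl
          have hvpos := hposum v hv0
          have hwpos := hposum w hw0
          have hvlt : (∑ i, v i) < N := by omega
          have hwlt : (∑ i, w i) < N := by omega
          subst huvw
          have hcequ : (fun i => (((v + w) i : ℕ) : ℝ))
              = (fun i => ((v i : ℕ) : ℝ)) + (fun i => ((w i : ℕ) : ℝ)) := by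
            funext i
            simp only [Pi.add_apply]
            push_cast
            ring
          rw [hcequ]
          exact hKadd _ (ih _ hvlt v rfl hvC hv0) _ (ih _ hwlt w rfl hwC hw0)
    intro u huC hu0
    exact key (∑ i, u i) u rfl huC hu0
  -- rational points of C lie in K
  have hQK : ∀ q : Fin n → ℚ, (fun i => (q i : ℝ)) ∈ C → (fun i => (q i : ℝ)) ∈ K := by
    intro q hqC
    set d : ℕ := ∏ i, (q i).den with hddef
    have hd0 : 0 < d := Finset.prod_pos fun i _ => (q i).pos
    have hqnn : ∀ i, 0 ≤ q i := by
      intro i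
      have := hpos _ hqC i
      exact_mod_cast this
    set u : Fin n → ℕ := fun i => (q i).num.toNat * (d / (q i).den) with hudef
    have hcast : ∀ i, ((u i : ℚ)) = (d : ℚ) * q i := by
      intro i
      have hdvd : (q i).den ∣ d := Finset.dvd_prod_of_mem _ (Finset.mem_univ i)
      obtain ⟨m, hm⟩ := hdvd
      have hnum : (((q i).num.toNat : ℤ)) = (q i).num :=
        Int.toNat_of_nonneg (Rat.num_nonneg.mpr (hqnn i))
      have h1 : ((q i).den : ℚ) * q i = ((q i).num : ℚ) := Rat.den_mul_eq_num (q i)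
      have hdiv : d / (q i).den = m := by
        rw [hm, Nat.mul_div_cancel_left _ (q i).pos]
      have h2 : (((q i).num.toNat : ℚ)) = ((q i).num : ℚ) := by exact_mod_cast hnum
      calc (u i : ℚ) = (((q i).num.toNat * (d / (q i).den) : ℕ) : ℚ) := rfl
        _ = ((q i).num.toNat : ℚ) * (m : ℚ) := by rw [hdiv]; push_cast; ring
        _ = ((q i).num : ℚ) * (m : ℚ) := by rw [h2]
        _ = (((q i).den : ℚ) * q i) * (m : ℚ) := by rw [h1]
        _ = (((q i).den * m : ℕ) : ℚ) * q i := by push_cast; ring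
        _ = (d : ℚ) * q i := by rw [← hm]
    have hcastR : (fun i => (u i : ℝ)) = (d : ℝ) • (fun i => (q i : ℝ)) := by
      funext i
      have h := hcast i
      have h' : (u i : ℝ) = (d : ℝ) * (q i : ℝ) := by exact_mod_cast congrArg (fun r : ℚ => (r : ℝ)) h
      show (u i : ℝ) = (d : ℝ) * (q i : ℝ)
      exact h'
    have huC : (fun i => (u i : ℝ)) ∈ C := by
      rw [hcastR]
      have := hcone _ hqC _ hqC (d : ℝ) 0 (by positivity) le_rfl
      simpa using this
    by_cases hu0 : u = 0
    · have hq0 : (fun i => (q i : ℝ)) = 0 := by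
        funext i
        have hui : u i = 0 := congrFun hu0 i
        have := hcast i
        rw [hui] at this
        have hqi : q i = 0 := by
          have h0 : (d : ℚ) * q i = 0 := by exact_mod_cast this.symm
          rcases mul_eq_zero.mp h0 with h | h
          · exact absurd h (by positivity)
          · exact h
        simp [hqi]
      rw [hq0]
      exact hK0
    · have h1 := hMK u huC hu0
      have h2 : (fun i => (q i : ℝ)) = (d : ℝ)⁻¹ • (fun i => (u i : ℝ)) := by
        rw [hcastR, smul_smul, inv_mul_cancel₀ (by positivity : (d:ℝ) ≠ 0), one_smul]
      rw [h2]
      exact hKsmul _ h1 _ (by positivity)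
  -- interior of C is nonempty
  have htop : affineSpan ℝ C = ⊤ := by
    rw [AffineSubspace.affineSpan_eq_top_iff_vectorSpan_eq_top_of_nonempty ℝ (Fin n → ℝ) (Fin n → ℝ) ⟨0, h0C⟩]
    rw [vectorSpan_eq_span_vsub_set_right ℝ h0C]
    simpa using hspan
  have hint : (interior C).Nonempty := by
    rw [hconv.interior_nonempty_iff_affineSpan_eq_top]
    exact htop
  obtain ⟨p, hp⟩ := hint
  -- interior points are approximated by points of K
  have hIntK : ∀ z ∈ interior C, ∀ ε : ℝ, 0 < ε → ∃ k ∈ K, dist z k < ε := by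
    intro z hz ε hε
    obtain ⟨δ, hδ0, hball⟩ := Metric.isOpen_iff.mp isOpen_interior z hz
    set r : ℝ := min δ ε with hrdef
    have hr0 : 0 < r := lt_min hδ0 hε
    have hex : ∀ i, ∃ qi : ℚ, z i < qi ∧ (qi : ℝ) < z i + r / 2 :=
      fun i => exists_rat_btwn (by linarith)
    choose q hq1 hq2 using hex
    have hdist : dist (fun i => (q i : ℝ)) z < r := by
      rw [dist_pi_lt_iff hr0]
      intro i
      rw [Real.dist_eq, abs_sub_lt_iff]
      constructor
      · have := hq2 i; linarith
      · have := hq1 i; linarith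
    have hqC : (fun i => (q i : ℝ)) ∈ C :=
      interior_subset (hball (by rw [Metric.mem_ball]; exact lt_of_lt_of_le hdist (min_le_left δ ε)))
    exact ⟨_, hQK q hqC, by
      rw [dist_comm]
      exact lt_of_lt_of_le hdist (min_le_right δ ε)⟩
  -- C ⊆ K
  have hCK : C ⊆ K := by
    intro x hx
    rw [← hKclosed.closure_eq]
    rw [Metric.mem_closure_iff]
    intro ε hε
    set t : ℝ := min 1 (ε / (2 * (dist p x + 1))) with htdef
    have hdpx : (0 : ℝ) ≤ dist p x := dist_nonneg
    have ht0 : 0 < t := lt_min one_pos (by positivity)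
    have ht1 : t ≤ 1 := min_le_left _ _
    have hz : t • p + (1 - t) • x ∈ interior C :=
      hconv.combo_interior_self_mem_interior hp hx ht0 (by linarith) (by ring)
    obtain ⟨k, hkK, hk⟩ := hIntK _ hz (ε / 2) (by linarith)
    refine ⟨k, hkK, ?_⟩
    have hdzx : dist (t • p + (1 - t) • x) x ≤ ε / 2 := by
      have heq : t • p + (1 - t) • x - x = t • (p - x) := by module
      rw [dist_eq_norm, heq, norm_smul, Real.norm_eq_abs, abs_of_pos ht0]
      calc t * ‖p - x‖ ≤ (ε / (2 * (dist p x + 1))) * (dist p x + 1) := by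
            apply mul_le_mul (min_le_right _ _) _ (norm_nonneg _) (by positivity)
            rw [← dist_eq_norm]
            linarith
        _ = ε / 2 := by
            field_simp
    calc dist x k ≤ dist x (t • p + (1 - t) • x) + dist (t • p + (1 - t) • x) k :=
          dist_triangle _ _ _
      _ < ε := by
          rw [dist_comm x (t • p + (1 - t) • x)]
          linarith
  exact hnotclosed (Set.Subset.antisymm hCK hKC ▸ hKclosed)
end

section
/- Let C be the convex cone of vectors u ∈ (ℝ≥0)^3 such that (u_1 - u_2, u_2 - u_3, u_3 - u_1) ≥_lex (0,0,0) and (u_1 - u_3, u_2 - u_1, u_3 - u_2) ≥_lex (0,0,0). Then C is not closed in ℝ^3: the vector (1,0,1) is not in C, but (1+ε, 0, 1) is in C for every ε > 0. -/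
/-- `(a,b,c) ≥_lex (0,0,0)`: first nonzero entry is positive, or all are zero. -/
def lex3 (a b c : ℝ) : Prop := 0 < a ∨ (a = 0 ∧ 0 < b) ∨ (a = 0 ∧ b = 0 ∧ 0 ≤ c)

/-- The initial cone of A₃-invariants for the lexicographic order x₁ > x₂ > x₃. -/
def coneA3 : Set (Fin 3 → ℝ) :=
  {u | (∀ i, 0 ≤ u i) ∧ lex3 (u 0 - u 1) (u 1 - u 2) (u 2 - u 0) ∧
       lex3 (u 0 - u 2) (u 1 - u 0) (u 2 - u 1)}

/-! At `(1 + ε, 0, 1)` the two lexicographic conditions are decided by their first entries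
`1 + ε` and `ε`. At `ε = 0` the second one falls through to `(0, -1, 1) ≥_lex 0`, which fails, so
the cone misses the endpoint of a continuous curve it otherwise contains and cannot be closed. -/

theorem not_isClosed_of_forall_pos_mem {X : Type*} [TopologicalSpace X] {S : Set X}
    {γ : ℝ → X} (hγ : Continuous γ) (hpos : ∀ t, 0 < t → γ t ∈ S) (h0 : γ 0 ∉ S) :
    ¬ IsClosed S := by
  intro hS
  have h0_mem : (0 : ℝ) ∈ closure (Set.Ioi 0) := by simp
  exact h0 (hS.closure_subset (map_mem_closure hγ h0_mem hpos))

theorem not_lex3_zero_neg (b c : ℝ) (hb : b < 0) : ¬ lex3 0 b c := by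
  unfold lex3
  grind

theorem vec_one_zero_one_notMem_coneA3 : (![1, 0, 1] : Fin 3 → ℝ) ∉ coneA3 := by
  rintro ⟨-, -, h⟩
  exact not_lex3_zero_neg (-1) 1 (by norm_num) (by simpa using h)

theorem vec_one_add_zero_one_mem_coneA3 {ε : ℝ} (hε : 0 < ε) :
    (![1 + ε, 0, 1] : Fin 3 → ℝ) ∈ coneA3 := by
  refine ⟨fun i => ?_, Or.inl ?_, Or.inl ?_⟩
  · fin_cases i <;> simp; linarith
  · simp; linarith
  · simpa using hε

/-- the initial cone of A₃ is not closed: (1,0,1) ∉ C but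
(1+ε,0,1) ∈ C for all ε > 0. -/
theorem stmt_6 :
    ¬ IsClosed coneA3 ∧ (![1, 0, 1] : Fin 3 → ℝ) ∉ coneA3 ∧
      ∀ ε : ℝ, 0 < ε → (![1 + ε, 0, 1] : Fin 3 → ℝ) ∈ coneA3 := by
  refine ⟨?_, vec_one_zero_one_notMem_coneA3, fun _ => vec_one_add_zero_one_mem_coneA3⟩
  refine not_isClosed_of_forall_pos_mem (γ := fun ε : ℝ => ![1 + ε, 0, 1]) ?_
    (fun _ => vec_one_add_zero_one_mem_coneA3) (by simpa using vec_one_zero_one_notMem_coneA3)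
  fun_prop
end

section
/- Let G be a subgroup of S_n and let C be the initial convex cone of G with respect to linear forms l_1, ..., l_n defining an admissible term order with x_1 > x_2 > ... > x_n. Then every non-increasing vector u ∈ (ℝ≥0)^n (i.e., u_1 ≥ u_2 ≥ ... ≥ u_n) belongs to C. In particular, C contains the vectors (1,0,...,0), (1,1,0,...,0), ..., (1,...,1), and hence spans ℝ^n as a vector space. -/
/-- `a ≥_lex 0`: all entries zero, or the first nonzero entry is positive. -/
def lexGe {n : ℕ} (a : Fin n → ℝ) : Prop :=
  (∀ j, a j = 0) ∨ ∃ i, (∀ j, j < i → a j = 0) ∧ 0 < a i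

/-- `a >_lex 0`: the first nonzero entry exists and is positive. -/
def lexGt {n : ℕ} (a : Fin n → ℝ) : Prop :=
  ∃ i, (∀ j, j < i → a j = 0) ∧ 0 < a i

/-- Action of a permutation on ℝ^n by permuting coordinates: (σ·v)ᵢ = v_{σ⁻¹ i}. -/
def permAct {n : ℕ} (σ : Equiv.Perm (Fin n)) (v : Fin n → ℝ) : Fin n → ℝ :=
  fun i => v (σ⁻¹ i)

/-- The initial convex cone of a permutation group G with respect to the term
order given by linear forms l₁, …, lₙ. -/
def initialCone {n : ℕ} (G : Subgroup (Equiv.Perm (Fin n)))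
    (l : Fin n → ((Fin n → ℝ) →ₗ[ℝ] ℝ)) : Set (Fin n → ℝ) :=
  {u | (∀ i, 0 ≤ u i) ∧ ∀ g ∈ G, lexGe fun k => l k (u - permAct g u)}

/-!
A non-increasing `u ≥ 0` is a nonnegative combination of indicators `1_A` of initial segments
`A = {1, …, m}`, so `u - g·u` is a nonnegative combination of the vectors `1_A - 1_{gA}`.
Since `A` is an initial segment, every element of `A \ gA` precedes every element of `gA \ A`;
pairing them off writes `1_A - 1_{gA}` as a sum of vectors `e_a - e_b` with `a < b`, which the
admissibility of the term order makes lexicographically positive. The vectors whose images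
under the forms are `≥_lex 0` form a convex cone, hence contain `u - g·u`. Finally
`e_i = 1_{[1, i]} - 1_{[1, i)}`, so the cone spans `ℝ^n`.
-/

open Finset

lemma lexGt_iff_pos_toLex {n : ℕ} {a : Fin n → ℝ} : lexGt a ↔ 0 < toLex a :=
  exists_congr fun _ => and_congr_left' <| forall₂_congr fun _ _ => eq_comm

lemma lexGe_iff_nonneg_toLex {n : ℕ} {a : Fin n → ℝ} : lexGe a ↔ 0 ≤ toLex a := by
  rw [le_iff_eq_or_lt, lexGe, ← lexGt, lexGt_iff_pos_toLex, eq_comm, ← funext_iff]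
  rfl

lemma lexGe_smul {n : ℕ} {c : ℝ} (hc : 0 ≤ c) {a : Fin n → ℝ} (ha : lexGe a) :
    lexGe (c • a) := by
  rcases hc.eq_or_lt with rfl | hc
  · exact Or.inl fun _ => zero_mul _
  · rcases ha with ha | ⟨i, hai, hpi⟩
    · exact Or.inl fun j => by simp [ha j]
    · exact Or.inr ⟨i, fun j hj => by simp [hai j hj], mul_pos hc hpi⟩

def lexNonnegCone (n : ℕ) : PointedCone ℝ (Fin n → ℝ) where
  carrier := {a | lexGe a}
  add_mem' ha hb := lexGe_iff_nonneg_toLex.2 <|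
    add_nonneg (lexGe_iff_nonneg_toLex.1 ha) (lexGe_iff_nonneg_toLex.1 hb)
  zero_mem' := Or.inl fun _ => rfl
  smul_mem' c _ ha := lexGe_smul c.2 ha

def lexCone {n : ℕ} (l : Fin n → (Fin n → ℝ) →ₗ[ℝ] ℝ) : PointedCone ℝ (Fin n → ℝ) :=
  (lexNonnegCone n).comap (LinearMap.pi l)

lemma single_sub_single_mem_lexCone {n : ℕ} {l : Fin n → (Fin n → ℝ) →ₗ[ℝ] ℝ}
    (hord : ∀ i j : Fin n, i < j → lexGt fun k => l k (Pi.single i 1 - Pi.single j 1))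
    {i j : Fin n} (hij : i < j) : Pi.single i 1 - Pi.single j 1 ∈ lexCone l :=
  Or.inr (hord i j hij)

lemma IsLowerSet.antitone_indicator_one {α : Type*} [Preorder α] {s : Set α}
    (hs : IsLowerSet s) : Antitone (s.indicator (1 : α → ℝ)) := by
  intro a b hab
  by_cases hb : b ∈ s
  · simp [Set.indicator_of_mem hb, Set.indicator_of_mem (hs hab hb)]
  · simp [Set.indicator_of_notMem hb, Set.indicator_nonneg]

lemma single_one_eq_indicator_Iic_sub_indicator_Iio {α : Type*} [PartialOrder α] [DecidableEq α]
    (i : α) : (Pi.single i 1 : α → ℝ) = (Set.Iic i).indicator 1 - (Set.Iio i).indicator 1 := by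
  rw [← Set.indicator_sdiff Set.Iio_subset_Iic_self, Set.Iic_sdiff_Iio_same,
    Set.indicator_singleton, Pi.one_apply]

lemma Finset.indicator_one_eq_sum_single {α : Type*} [DecidableEq α] (s : Finset α) :
    (s : Set α).indicator (1 : α → ℝ) = ∑ a ∈ s, Pi.single a 1 := by
  ext i
  simp [Finset.sum_apply, Set.indicator_apply]

lemma permAct_indicator_one {n : ℕ} (σ : Equiv.Perm (Fin n)) (s : Set (Fin n)) :
    permAct σ (s.indicator 1) = (σ '' s).indicator 1 := by
  ext i
  rw [permAct, Equiv.image_eq_preimage_symm]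
  exact (Set.indicator_comp_right (f := σ.symm) (x := i)).symm

lemma sum_sub_smul_indicator_eq {n : ℕ} (v : ℕ → ℝ) (hv : v n = 0) :
    ∑ m ∈ range n, (v m - v (m + 1)) • {i : Fin n | (i : ℕ) ≤ m}.indicator 1 =
      fun i : Fin n => v i := by
  ext i
  have hIco : (range n).filter (fun m => (i : ℕ) ≤ m) = Ico (i : ℕ) n := by
    ext m
    simp [and_comm]
  have htelescope := sum_Ico_sub (-v) i.isLt.le
  simp only [Pi.neg_apply, neg_sub_neg, hv] at htelescope
  simp only [Finset.sum_apply, Pi.smul_apply, Set.indicator_apply, Set.mem_ofPred_eq,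
    Pi.one_apply, smul_eq_mul, mul_ite, mul_one, mul_zero]
  rw [← sum_filter, hIco, htelescope, sub_zero]

section Cone

variable {n : ℕ} {C : PointedCone ℝ (Fin n → ℝ)}
  (hC : ∀ i j : Fin n, i < j → Pi.single i 1 - Pi.single j 1 ∈ C)
include hC

lemma indicator_sub_indicator_mem {A B : Finset (Fin n)} (hcard : #A = #B)
    (hlt : ∀ a ∈ A \ B, ∀ b ∈ B \ A, a < b) :
    (A : Set (Fin n)).indicator 1 - (B : Set (Fin n)).indicator 1 ∈ C := by
  classical
  let e := (A \ B).equivOfCardEq (card_sdiff_comm hcard)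
  have hpair : (A : Set (Fin n)).indicator 1 - (B : Set (Fin n)).indicator 1
      = ∑ a : ↥(A \ B), (Pi.single (a : Fin n) 1 - Pi.single (e a : Fin n) 1 : Fin n → ℝ) := by
    rw [sum_sub_distrib, e.sum_comp fun b => (Pi.single (b : Fin n) 1 : Fin n → ℝ),
      sum_coe_sort (A \ B) fun a => (Pi.single a 1 : Fin n → ℝ),
      sum_coe_sort (B \ A) fun a => (Pi.single a 1 : Fin n → ℝ), sum_sdiff_sub_sum_sdiff,
      A.indicator_one_eq_sum_single, B.indicator_one_eq_sum_single]
  rw [hpair]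
  exact sum_mem fun a _ => hC _ _ (hlt _ a.2 _ (e a).2)

lemma IsLowerSet.indicator_sub_permAct_mem {s : Set (Fin n)} (hs : IsLowerSet s)
    (σ : Equiv.Perm (Fin n)) : s.indicator 1 - permAct σ (s.indicator 1) ∈ C := by
  classical
  obtain ⟨A, rfl⟩ := s.toFinite.exists_finset_coe
  rw [permAct_indicator_one, ← coe_image]
  refine indicator_sub_indicator_mem hC (card_image_of_injective _ σ.injective).symm
    fun a ha b hb => ?_
  simp only [mem_sdiff, mem_image] at ha hb
  exact lt_of_not_ge fun hba => hb.2 (hs hba ha.1)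

lemma sub_permAct_mem (σ : Equiv.Perm (Fin n)) {u : Fin n → ℝ} (hnn : 0 ≤ u) (hu : Antitone u) :
    u - permAct σ u ∈ C := by
  let v : ℕ → ℝ := fun k => if h : k < n then u ⟨k, h⟩ else 0
  have hv : ∀ m, 0 ≤ v m - v (m + 1) := by
    intro m
    by_cases h : m + 1 < n
    · simpa [v, h, (Nat.lt_succ_self m).trans h] using hu (Fin.mk_le_mk.2 m.le_succ)
    · by_cases h' : m < n
      · simpa [v, h, h'] using hnn ⟨m, h'⟩
      · simp [v, h, h']
  have hu_eq : (fun i : Fin n => v i) = u := by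
    ext i
    simp [v]
  let L : (Fin n → ℝ) →ₗ[ℝ] Fin n → ℝ := LinearMap.id - LinearMap.funLeft ℝ ℝ ⇑σ⁻¹
  change u ∈ C.comap L
  rw [← hu_eq, ← sum_sub_smul_indicator_eq v (by simp [v])]
  exact sum_mem fun m _ => (C.comap L).smul_mem (hv m) <|
    IsLowerSet.indicator_sub_permAct_mem hC (fun _ _ hab hb => (Fin.le_def.1 hab).trans hb) σ

end Cone

section InitialCone

variable {n : ℕ} (G : Subgroup (Equiv.Perm (Fin n))) {l : Fin n → (Fin n → ℝ) →ₗ[ℝ] ℝ}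
  (hord : ∀ i j : Fin n, i < j → lexGt fun k => l k (Pi.single i 1 - Pi.single j 1))
include hord

theorem mem_initialCone_of_antitone {u : Fin n → ℝ} (hnn : 0 ≤ u) (hu : Antitone u) :
    u ∈ initialCone G l :=
  ⟨hnn, fun g _ => sub_permAct_mem (fun _ _ => single_sub_single_mem_lexCone hord) g hnn hu⟩

theorem IsLowerSet.indicator_one_mem_initialCone {s : Set (Fin n)} (hs : IsLowerSet s) :
    s.indicator 1 ∈ initialCone G l :=
  mem_initialCone_of_antitone G hord (fun _ => Set.indicator_nonneg (fun _ _ => zero_le_one) _)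
    hs.antitone_indicator_one

end InitialCone

theorem stmt_10_general (n : ℕ) (G : Subgroup (Equiv.Perm (Fin n)))
    (l : Fin n → ((Fin n → ℝ) →ₗ[ℝ] ℝ))
    (hord : ∀ i j : Fin n, i < j → lexGt fun k => l k (Pi.single i 1 - Pi.single j 1)) :
    (∀ u : Fin n → ℝ, (∀ i, 0 ≤ u i) → (∀ i j : Fin n, i ≤ j → u j ≤ u i) →
      u ∈ initialCone G l) ∧ Submodule.span ℝ (initialCone G l) = ⊤ := by
  refine ⟨fun u hnn hu => mem_initialCone_of_antitone G hord hnn hu, eq_top_iff.2 ?_⟩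
  rw [← (Pi.basisFun ℝ (Fin n)).span_eq, Submodule.span_le]
  rintro _ ⟨i, rfl⟩
  rw [Pi.basisFun_apply, single_one_eq_indicator_Iic_sub_indicator_Iio]
  exact Submodule.sub_mem _
    (Submodule.subset_span ((isLowerSet_Iic i).indicator_one_mem_initialCone G hord))
    (Submodule.subset_span ((isLowerSet_Iio i).indicator_one_mem_initialCone G hord))

/-- for an admissible term order with x₁ > … > xₙ, every
non-increasing nonnegative vector belongs to the initial cone; in particular
the cone spans ℝ^n. -/
theorem stmt_10 (n : ℕ) (G : Subgroup (Equiv.Perm (Fin n)))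
    (l : Fin n → ((Fin n → ℝ) →ₗ[ℝ] ℝ))
    (hli : LinearIndependent ℝ l)
    (hord : ∀ i j : Fin n, i < j → lexGt fun k => l k (Pi.single i 1 - Pi.single j 1)) :
    (∀ u : Fin n → ℝ, (∀ i, 0 ≤ u i) → (∀ i j : Fin n, i ≤ j → u j ≤ u i) →
      u ∈ initialCone G l) ∧ Submodule.span ℝ (initialCone G l) = ⊤ :=
  stmt_10_general n G l hord
end

section
/- Let G ≤ S_n, not generated by transpositions, and let C ⊆ (ℝ≥0)^n be the initial convex cone of G with respect to any admissible term order with x_1 > ... > x_n. Then C is not closed in ℝ^n. -/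
namespace StmtAux

variable {n : ℕ}

lemma lexGe_zero : lexGe (fun _ : Fin n => (0:ℝ)) := Or.inl fun _ => rfl

lemma lexGt_lexGe {a : Fin n → ℝ} (h : lexGt a) : lexGe a := Or.inr h

lemma lexGt_add {a b : Fin n → ℝ} (ha : lexGt a) (hb : lexGe b) :
    lexGt (fun k => a k + b k) := by
  obtain ⟨i, hz, hp⟩ := ha
  rcases hb with hb | ⟨i', hz', hp'⟩
  · exact ⟨i, fun j hj => show a j + b j = 0 by rw [hz j hj, hb j, add_zero],
      show 0 < a i + b i by rw [hb i, add_zero]; exact hp⟩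
  rcases lt_trichotomy i i' with h | h | h
  · exact ⟨i, fun j hj => show a j + b j = 0 by rw [hz j hj, hz' j (hj.trans h), add_zero],
      show 0 < a i + b i by rw [hz' i h, add_zero]; exact hp⟩
  · subst h
    exact ⟨i, fun j hj => show a j + b j = 0 by rw [hz j hj, hz' j hj, add_zero],
      show 0 < a i + b i by positivity⟩
  · exact ⟨i', fun j hj => show a j + b j = 0 by rw [hz j (hj.trans h), hz' j hj, add_zero],
      show 0 < a i' + b i' by rw [hz i' h, zero_add]; exact hp'⟩

lemma lexGe_add {a b : Fin n → ℝ} (ha : lexGe a) (hb : lexGe b) :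
    lexGe (fun k => a k + b k) := by
  rcases ha with ha | ha
  · rcases hb with hb | hb
    · exact Or.inl fun j => show a j + b j = 0 by rw [ha j, hb j, add_zero]
    · refine Or.inr ?_
      have := lexGt_add hb (Or.inl ha)
      simpa [add_comm, lexGt] using this
  · exact Or.inr (lexGt_add ha hb)

lemma lexGe_smul {c : ℝ} (hc : 0 ≤ c) {a : Fin n → ℝ} (ha : lexGe a) :
    lexGe (fun k => c * a k) := by
  rcases hc.eq_or_lt with rfl | hc
  · exact Or.inl fun j => by simp
  rcases ha with ha | ⟨i, hz, hp⟩
  · exact Or.inl fun j => show c * a j = 0 by rw [ha j, mul_zero]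
  · exact Or.inr ⟨i, fun j hj => show c * a j = 0 by rw [hz j hj, mul_zero],
      show 0 < c * a i by positivity⟩

lemma lexGt_smul {c : ℝ} (hc : 0 < c) {a : Fin n → ℝ} (ha : lexGt a) :
    lexGt (fun k => c * a k) := by
  obtain ⟨i, hz, hp⟩ := ha
  exact ⟨i, fun j hj => show c * a j = 0 by rw [hz j hj, mul_zero],
    show 0 < c * a i by positivity⟩

lemma lexGt_not_neg {a : Fin n → ℝ} (ha : lexGt a) : ¬ lexGe (fun k => - a k) := by
  obtain ⟨i, hz, hp⟩ := ha
  rintro (h | ⟨i', hz', hp'⟩)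
  · have := h i; simp only [neg_eq_zero] at this; exact hp.ne' this
  rcases lt_trichotomy i i' with h | h | h
  · have := hz' i h; simp only [neg_eq_zero] at this; exact hp.ne' this
  · subst h; have : 0 < -a i := hp'; linarith
  · have h0 := hz i' h; have : 0 < -a i' := hp'; rw [h0] at this; simp at this

lemma lexGe_antisymm {a : Fin n → ℝ} (h1 : lexGe a) (h2 : lexGe (fun k => - a k)) :
    ∀ k, a k = 0 := by
  rcases h1 with h1 | h1
  · exact h1
  · exact absurd h2 (lexGt_not_neg h1)

lemma lexGe_total (a : Fin n → ℝ) : lexGe a ∨ lexGe (fun k => - a k) := by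
  by_cases h0 : ∀ j, a j = 0
  · exact Or.inl (Or.inl h0)
  push_neg at h0
  classical
  have hne : (Finset.univ.filter (fun j => a j ≠ 0)).Nonempty := by
    obtain ⟨j, hj⟩ := h0
    exact ⟨j, by simp [hj]⟩
  set i := (Finset.univ.filter (fun j => a j ≠ 0)).min' hne with hi
  have hmem : a i ≠ 0 := by
    have := Finset.min'_mem _ hne
    simpa [hi] using this
  have hzb : ∀ j, j < i → a j = 0 := by
    intro j hj
    by_contra hja
    have : i ≤ j := Finset.min'_le _ _ (by simp [hja])
    exact absurd hj (not_lt.mpr this)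
  rcases lt_or_gt_of_ne hmem with h | h
  · exact Or.inr (Or.inr ⟨i, fun j hj => show -a j = 0 by rw [hzb j hj, neg_zero],
      show 0 < -a i by linarith⟩)
  · exact Or.inl (Or.inr ⟨i, hzb, h⟩)

lemma permAct_mul (g g' : Equiv.Perm (Fin n)) (v : Fin n → ℝ) :
    permAct g (permAct g' v) = permAct (g * g') v := by
  funext i
  simp [permAct, mul_inv_rev, Equiv.Perm.mul_apply]

lemma permAct_one (v : Fin n → ℝ) : permAct 1 v = v := rfl

lemma exists_lexMax {α : Type*} (s : Finset α) (hs : s.Nonempty) (f : α → Fin n → ℝ) :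
    ∃ h ∈ s, ∀ g ∈ s, lexGe (fun k => f h k - f g k) := by
  classical
  induction s using Finset.induction_on with
  | empty => exact absurd hs (by simp)
  | @insert a s ha IH =>
    by_cases hse : s.Nonempty
    · obtain ⟨h, hhs, hmax⟩ := IH hse
      rcases lexGe_total (fun k => f h k - f a k) with hcase | hcase
      · refine ⟨h, Finset.mem_insert_of_mem hhs, ?_⟩
        intro g hg
        rcases Finset.mem_insert.mp hg with rfl | hg
        · exact hcase
        · exact hmax g hg
      · have hah : lexGe (fun k => f a k - f h k) := by
          have : (fun k => -(f h k - f a k)) = fun k => f a k - f h k := funext fun k => by ring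
          rwa [this] at hcase
        refine ⟨a, Finset.mem_insert_self a s, ?_⟩
        intro g hg
        rcases Finset.mem_insert.mp hg with rfl | hg
        · have : (fun k => f g k - f g k) = fun _ : Fin n => (0:ℝ) := funext fun k => by ring
          rw [this]; exact lexGe_zero
        · have := lexGe_add hah (hmax g hg)
          have heq : (fun k => (f a k - f h k) + (f h k - f g k)) = fun k => f a k - f g k :=
            funext fun k => by ring
          rwa [heq] at this
    · rw [Finset.not_nonempty_iff_eq_empty] at hse
      subst hse
      refine ⟨a, Finset.mem_insert_self a _, ?_⟩
      intro g hg
      rcases Finset.mem_insert.mp hg with rfl | hg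
      · have : (fun k => f g k - f g k) = fun _ : Fin n => (0:ℝ) := funext fun k => by ring
        rw [this]; exact lexGe_zero
      · exact absurd hg (by simp)

lemma eq_zero_of_forms (l : Fin n → ((Fin n → ℝ) →ₗ[ℝ] ℝ)) (hli : LinearIndependent ℝ l)
    {x : Fin n → ℝ} (hx : ∀ k, l k x = 0) : x = 0 := by
  rcases Nat.eq_zero_or_pos n with rfl | hn
  · funext i; exact i.elim0
  haveI : Nonempty (Fin n) := ⟨⟨0, hn⟩⟩
  have hcard : Fintype.card (Fin n) = Module.finrank ℝ ((Fin n → ℝ) →ₗ[ℝ] ℝ) := by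
    rw [Module.finrank_linearMap]
    simp
  let B := basisOfLinearIndependentOfCardEqFinrank hli hcard
  refine (Module.forall_dual_apply_eq_zero_iff ℝ x).mp fun φ => ?_
  rw [← B.sum_repr φ]
  have hB : ∀ i, B i = l i := fun i => by
    simp [B, coe_basisOfLinearIndependentOfCardEqFinrank]
  simp only [LinearMap.coe_sum, Finset.sum_apply, LinearMap.smul_apply, smul_eq_mul]
  rw [Finset.sum_eq_zero]
  intro i _
  rw [hB i, hx i, mul_zero]

/-- Any weakly decreasing vector satisfies the lex conditions for every permutation. -/
lemma lexGe_perm_diff (l : Fin n → ((Fin n → ℝ) →ₗ[ℝ] ℝ))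
    (hord : ∀ i j : Fin n, i < j → lexGt fun k => l k (Pi.single i 1 - Pi.single j 1))
    (u : Fin n → ℝ) (hdec : ∀ i j : Fin n, i ≤ j → u j ≤ u i) (g : Equiv.Perm (Fin n)) :
    lexGe (fun k => l k (u - permAct g u)) := by
  classical
  suffices H : ∀ m (g : Equiv.Perm (Fin n)), g.support.card = m →
      lexGe (fun k => l k (u - permAct g u)) from H _ g rfl
  intro m
  induction m using Nat.strong_induction_on with
  | _ m IH =>
  intro g hg
  by_cases h1 : g = 1
  · subst h1
    have : (fun k => l k (u - permAct 1 u)) = fun _ : Fin n => (0:ℝ) := by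
      funext k; rw [permAct_one, sub_self, map_zero]
    rw [this]; exact lexGe_zero
  have hsupp : g.support.Nonempty := by
    rw [Finset.nonempty_iff_ne_empty]; intro he; exact h1 (Equiv.Perm.support_eq_empty_iff.mp he)
  set i := g.support.min' hsupp with hidef
  have hi_mem : i ∈ g.support := Finset.min'_mem _ _
  have hgi : g i ≠ i := Equiv.Perm.mem_support.mp hi_mem
  have hmin : ∀ x ∈ g.support, i ≤ x := fun x hx => Finset.min'_le _ _ hx
  set j := g⁻¹ i with hjdef
  have hgj : g j = i := g.apply_symm_apply i
  have hji : j ≠ i := by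
    intro h; rw [h] at hgj; exact hgi hgj
  have hj_mem : j ∈ g.support := Equiv.Perm.mem_support.mpr (by rw [hgj]; exact fun h => hji h.symm)
  have hij : i < j := lt_of_le_of_ne (hmin j hj_mem) (Ne.symm hji)
  have hgi_mem : g i ∈ g.support := by
    rw [Equiv.Perm.mem_support]
    intro h
    exact hgi (g.injective h)
  have higi : i < g i := lt_of_le_of_ne (hmin _ hgi_mem) (Ne.symm hgi)
  set τ := Equiv.swap i j with hτ
  set g' := g * τ with hg'
  have hsub : g'.support ⊆ g.support.erase i := by
    intro x hx
    rw [Equiv.Perm.mem_support] at hx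
    rw [Finset.mem_erase, Equiv.Perm.mem_support]
    constructor
    · rintro rfl
      apply hx
      rw [hg', Equiv.Perm.mul_apply, hτ, Equiv.swap_apply_left, hgj]
    · intro hgxx
      apply hx
      have hxi : x ≠ i := by rintro rfl; exact hgi hgxx
      have hxj : x ≠ j := by rintro rfl; rw [hgj] at hgxx; exact hji hgxx.symm
      rw [hg', Equiv.Perm.mul_apply, hτ, Equiv.swap_apply_of_ne_of_ne hxi hxj, hgxx]
  have hcard' : g'.support.card < m :=
    hg ▸ lt_of_le_of_lt (Finset.card_le_card hsub) (Finset.card_erase_lt_of_mem hi_mem)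
  have IH' := IH _ hcard' g' rfl
  have hg'inv : ∀ x, g'⁻¹ x = τ (g⁻¹ x) := by
    intro x
    rw [hg', mul_inv_rev, Equiv.Perm.mul_apply, hτ, Equiv.swap_inv]
  have hvec : u - permAct g u =
      (u - permAct g' u) + (u i - u j) • (Pi.single i 1 - Pi.single (g i) 1) := by
    funext x
    simp only [Pi.add_apply, Pi.sub_apply, Pi.smul_apply, smul_eq_mul, permAct]
    rw [hg'inv]
    rcases eq_or_ne (g⁻¹ x) i with hyi | hyi
    · have hx : x = g i := by rw [← hyi]; exact (g.apply_symm_apply x).symm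
      rw [hyi, hτ, Equiv.swap_apply_left, hx, Pi.single_eq_of_ne hgi, Pi.single_eq_same]
      ring
    rcases eq_or_ne (g⁻¹ x) j with hyj | hyj
    · have hx : x = i := by
        rw [← hgj, ← hyj]; exact (g.apply_symm_apply x).symm
      rw [hyj, hτ, Equiv.swap_apply_right, hx, Pi.single_eq_same,
        Pi.single_eq_of_ne (Ne.symm hgi)]
      try ring
    · have hxi : x ≠ i := by
        intro h; apply hyj; rw [h]
      have hxgi : x ≠ g i := by
        intro h; apply hyi; rw [h, Equiv.Perm.inv_def, Equiv.symm_apply_apply]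
      rw [hτ, Equiv.swap_apply_of_ne_of_ne hyi hyj, Pi.single_eq_of_ne hxi,
        Pi.single_eq_of_ne hxgi]
      ring
  have hre : (fun k => l k (u - permAct g u)) =
      fun k => l k (u - permAct g' u) + (u i - u j) * l k (Pi.single i 1 - Pi.single (g i) 1) := by
    funext k
    rw [hvec, map_add, map_smul, smul_eq_mul]
  rw [hre]
  exact lexGe_add IH' (lexGe_smul (sub_nonneg.mpr (hdec i j hij.le))
    (lexGt_lexGe (hord i (g i) higi)))

/-- Every orbit of a nonnegative vector meets the initial cone. -/
lemma exists_rep (G : Subgroup (Equiv.Perm (Fin n))) (l : Fin n → ((Fin n → ℝ) →ₗ[ℝ] ℝ))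
    (v : Fin n → ℝ) (hv : ∀ i, 0 ≤ v i) :
    ∃ h ∈ G, permAct h v ∈ initialCone G l := by
  classical
  have hne : (Finset.univ.filter (fun g : Equiv.Perm (Fin n) => g ∈ G)).Nonempty :=
    ⟨1, by simp [G.one_mem]⟩
  obtain ⟨h, hh, hmax⟩ := exists_lexMax _ hne (fun g k => l k (permAct g v))
  have hhG : h ∈ G := by simpa using hh
  refine ⟨h, hhG, fun i => hv _, fun g hg => ?_⟩
  have hmem : g * h ∈ Finset.univ.filter (fun g : Equiv.Perm (Fin n) => g ∈ G) := by
    simp [mul_mem hg hhG]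
  have := hmax (g * h) hmem
  have heq : (fun k => l k (permAct h v - permAct g (permAct h v))) =
      fun k => l k (permAct h v) - l k (permAct (g * h) v) := by
    funext k
    rw [map_sub, permAct_mul]
  rwa [heq]

/-- Uniqueness of orbit representatives in the initial cone. -/
lemma rep_unique {G : Subgroup (Equiv.Perm (Fin n))} {l : Fin n → ((Fin n → ℝ) →ₗ[ℝ] ℝ)}
    (hli : LinearIndependent ℝ l) {v : Fin n → ℝ} (hv : v ∈ initialCone G l)
    {h : Equiv.Perm (Fin n)} (hh : h ∈ G) (hhv : permAct h v ∈ initialCone G l) :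
    permAct h v = v := by
  have h1 := hv.2 h hh
  have h2 := hhv.2 h⁻¹ (inv_mem hh)
  have h2' : lexGe (fun k => - (l k (v - permAct h v))) := by
    have heq : (fun k => l k (permAct h v - permAct h⁻¹ (permAct h v))) =
        fun k => - (l k (v - permAct h v)) := by
      funext k
      rw [permAct_mul, inv_mul_cancel, permAct_one, ← map_neg, neg_sub]
    rwa [heq] at h2
  have hz := lexGe_antisymm h1 h2'
  have h0 : v - permAct h v = 0 := eq_zero_of_forms l hli hz
  have := sub_eq_zero.mp h0
  exact this.symm

/-- If the transpositions inside G do not generate G, there is a pair a < b in the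
same orbit whose transposition is not in G. -/
lemma exists_bad_pair (G : Subgroup (Equiv.Perm (Fin n)))
    (hgen : Subgroup.closure {σ : Equiv.Perm (Fin n) | σ.IsSwap ∧ σ ∈ G} ≠ G) :
    ∃ (b a : Fin n), a < b ∧ (∃ k ∈ G, k a = b) ∧ Equiv.swap a b ∉ G := by
  classical
  by_contra hno
  push_neg at hno
  have hswap : ∀ (a b : Fin n), a ≠ b → (∃ k ∈ G, k a = b) → Equiv.swap a b ∈ G := by
    intro a b hab ⟨k, hk, hka⟩
    rcases lt_or_gt_of_ne hab with hlt | hlt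
    · exact hno b a hlt ⟨k, hk, hka⟩
    · have : Equiv.swap b a ∈ G := hno a b hlt ⟨k⁻¹, inv_mem hk, by rw [← hka, Equiv.Perm.inv_def, Equiv.symm_apply_apply]⟩
      rwa [Equiv.swap_comm]
  apply hgen
  refine le_antisymm ((Subgroup.closure_le G).mpr fun σ hσ => hσ.2) ?_
  intro g hg
  suffices H : ∀ m (g : Equiv.Perm (Fin n)), g ∈ G → g.support.card = m →
      g ∈ Subgroup.closure {σ : Equiv.Perm (Fin n) | σ.IsSwap ∧ σ ∈ G} from H _ g hg rfl
  intro m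
  induction m using Nat.strong_induction_on with
  | _ m IH =>
  intro g hgG hgc
  by_cases h1 : g = 1
  · subst h1; exact one_mem _
  have hsupp : g.support.Nonempty := by
    rw [Finset.nonempty_iff_ne_empty]
    intro he; exact h1 (Equiv.Perm.support_eq_empty_iff.mp he)
  obtain ⟨x, hx⟩ := hsupp
  have hgx : g x ≠ x := Equiv.Perm.mem_support.mp hx
  set τ := Equiv.swap x (g x) with hτ
  have hτG : τ ∈ G := hswap x (g x) (Ne.symm hgx) ⟨g, hgG, rfl⟩
  have hτcl : τ ∈ Subgroup.closure {σ : Equiv.Perm (Fin n) | σ.IsSwap ∧ σ ∈ G} :=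
    Subgroup.subset_closure ⟨⟨x, g x, Ne.symm hgx, hτ⟩, hτG⟩
  set g'' := τ * g with hg''
  have hsub : g''.support ⊆ g.support.erase x := by
    intro y hy
    rw [Equiv.Perm.mem_support] at hy
    rw [Finset.mem_erase, Equiv.Perm.mem_support]
    constructor
    · rintro rfl
      apply hy
      rw [hg'', Equiv.Perm.mul_apply, hτ, Equiv.swap_apply_right]
    · intro hgyy
      apply hy
      have hyx : y ≠ x := by rintro rfl; exact hgx hgyy
      have hygx : y ≠ g x := by
        rintro rfl
        exact hgx (g.injective hgyy)
      rw [hg'', Equiv.Perm.mul_apply, hgyy, hτ, Equiv.swap_apply_of_ne_of_ne hyx hygx]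
  have hcard' : g''.support.card < m :=
    hgc ▸ lt_of_le_of_lt (Finset.card_le_card hsub) (Finset.card_erase_lt_of_mem hx)
  have hg''cl := IH _ hcard' g'' (mul_mem hτG hgG) rfl
  have : g = τ * g'' := by
    rw [hg'', ← mul_assoc, hτ, Equiv.swap_mul_self, one_mul]
  rw [this]
  exact mul_mem hτcl hg''cl

noncomputable def wvec (n : ℕ) : Fin n → ℝ := fun x => (n : ℝ) - 1 - (x : ℕ)

noncomputable def chi {n : ℕ} (b : Fin n) : Fin n → ℝ := fun x => if x = b then 1/2 else 0

noncomputable def uvec {n : ℕ} (b : Fin n) (t : ℝ) : Fin n → ℝ := fun x => t * wvec n x + chi b x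

lemma wvec_nonneg (x : Fin n) : 0 ≤ wvec n x := by
  have h1 : (x : ℕ) + 1 ≤ n := x.isLt
  have : ((x : ℕ) : ℝ) + 1 ≤ (n : ℝ) := by exact_mod_cast h1
  simp only [wvec]; linarith

lemma wvec_lt {x y : Fin n} (h : x < y) : wvec n y + 1 ≤ wvec n x := by
  have h1 : (x : ℕ) + 1 ≤ (y : ℕ) := Nat.succ_le_of_lt (Fin.lt_def.mp h)
  have : ((x : ℕ) : ℝ) + 1 ≤ ((y : ℕ) : ℝ) := by exact_mod_cast h1
  simp only [wvec]; linarith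

lemma wvec_lt_iff {x y : Fin n} (h : wvec n y < wvec n x) : x < y := by
  simp only [wvec] at h
  have h1 : ((x : ℕ) : ℝ) < ((y : ℕ) : ℝ) := by linarith
  have h2 : (x : ℕ) < (y : ℕ) := by exact_mod_cast h1
  exact Fin.lt_def.mpr h2

lemma wvec_inj {x y : Fin n} (h : wvec n x = wvec n y) : x = y := by
  simp only [wvec] at h
  have : ((x : ℕ) : ℝ) = ((y : ℕ) : ℝ) := by linarith
  exact Fin.ext (by exact_mod_cast this)

lemma chi_nonneg (b x : Fin n) : 0 ≤ chi b x := by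
  simp only [chi]; split_ifs <;> norm_num

lemma chi_le_half (b x : Fin n) : chi b x ≤ 1/2 := by
  simp only [chi]; split_ifs <;> norm_num

lemma uvec_nonneg (b : Fin n) {t : ℝ} (ht : 0 ≤ t) (x : Fin n) : 0 ≤ uvec b t x :=
  add_nonneg (mul_nonneg ht (wvec_nonneg x)) (chi_nonneg b x)

lemma uvec_cont (b : Fin n) (h : Equiv.Perm (Fin n)) :
    Continuous fun t => permAct h (uvec b t) := by
  refine continuous_pi fun x => ?_
  show Continuous fun t => t * wvec n (h⁻¹ x) + chi b (h⁻¹ x)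
  exact (continuous_id.mul continuous_const).add continuous_const

lemma uvec_one_dec (b : Fin n) : ∀ i j : Fin n, i ≤ j → uvec b 1 j ≤ uvec b 1 i := by
  intro i j hij
  rcases eq_or_lt_of_le hij with rfl | hij
  · exact le_refl _
  have h1 := wvec_lt hij
  have h2 := chi_le_half b j
  have h3 := chi_nonneg b i
  simp only [uvec, one_mul]
  linarith

lemma uvec_zero_sub {b a : Fin n} (hab : a ≠ b) (k₀ : Equiv.Perm (Fin n)) (hk : k₀ a = b) :
    uvec b 0 - permAct k₀⁻¹ (uvec b 0) = (-(1/2 : ℝ)) • (Pi.single a 1 - Pi.single b 1) := by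
  have hkb : k₀ b ≠ b := by
    intro h
    exact hab (k₀.injective (hk.trans h.symm))
  funext x
  have hxb : permAct k₀⁻¹ (uvec b 0) x = chi b (k₀ x) := by
    simp [permAct, uvec]
  simp only [Pi.sub_apply, Pi.smul_apply, smul_eq_mul, hxb, uvec, zero_mul, zero_add, chi]
  rcases eq_or_ne x a with hxa | hxa
  · have h1 : k₀ x = b := by rw [hxa, hk]
    rw [if_neg (show x ≠ b by rw [hxa]; exact hab), if_pos h1, hxa, Pi.single_eq_same,
      Pi.single_eq_of_ne hab]
    norm_num
  rcases eq_or_ne x b with hxb2 | hxb2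
  · have h1 : k₀ x ≠ b := by rw [hxb2]; exact hkb
    rw [if_pos hxb2, if_neg h1, hxb2, Pi.single_eq_same, Pi.single_eq_of_ne (Ne.symm hab)]
    norm_num
  · have h1 : k₀ x ≠ b := fun h => hxa (k₀.injective (h.trans hk.symm))
    rw [if_neg hxb2, if_neg h1, Pi.single_eq_of_ne hxa, Pi.single_eq_of_ne hxb2]
    norm_num

lemma uvec_collide {b : Fin n} {t : ℝ} (ht : 0 < t) {x y : Fin n}
    (hxy : uvec b t x = uvec b t y) (hne : x ≠ y) : x = b ∨ y = b := by
  by_contra hbb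
  push_neg at hbb
  simp only [uvec, chi, if_neg hbb.1, if_neg hbb.2, add_zero] at hxy
  exact hne (wvec_inj (mul_left_cancel₀ ht.ne' hxy))

lemma uvec_b_lt {b j0 : Fin n} {t : ℝ} (ht : 0 < t) (hj : j0 ≠ b)
    (he : uvec b t j0 = uvec b t b) : j0 < b := by
  simp [uvec, chi, hj] at he
  have hw : wvec n b < wvec n j0 := by nlinarith
  exact wvec_lt_iff hw

end StmtAux

open StmtAux

/-- if G is not generated by its transpositions, the initial
convex cone of G (for any admissible term order with x₁ > … > xₙ) is not
closed in ℝ^n. -/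
theorem stmt_18 (n : ℕ) (G : Subgroup (Equiv.Perm (Fin n)))
    (hgen : Subgroup.closure {σ : Equiv.Perm (Fin n) | σ.IsSwap ∧ σ ∈ G} ≠ G)
    (l : Fin n → ((Fin n → ℝ) →ₗ[ℝ] ℝ)) (hli : LinearIndependent ℝ l)
    (hord : ∀ i j : Fin n, i < j → lexGt fun k => l k (Pi.single i 1 - Pi.single j 1)) :
    ¬ IsClosed (initialCone G l) := by

  classical
  intro hC
  obtain ⟨b₀, a₀, hab₀, hk₀pair, hsw₀⟩ := exists_bad_pair G hgen
  have hQ : ∃ m : ℕ, ∃ (hm : m < n), ∃ a : Fin n, a < ⟨m, hm⟩ ∧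
      (∃ k ∈ G, k a = ⟨m, hm⟩) ∧ Equiv.swap a ⟨m, hm⟩ ∉ G :=
    ⟨b₀.1, b₀.isLt, a₀, hab₀, hk₀pair, hsw₀⟩
  obtain ⟨hN, a, hab, ⟨k₀, hk₀G, hk₀a⟩, hswab⟩ := Nat.find_spec hQ
  set b : Fin n := ⟨Nat.find hQ, hN⟩ with hbdef
  have hab' : a ≠ b := ne_of_lt hab
  set C := initialCone G l with hCdef
  set T : Set ℝ := Set.Icc (0:ℝ) 1 ∩ (fun t => uvec b t) ⁻¹' C with hTdef
  have hTclosed : IsClosed T := by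
    refine isClosed_Icc.inter (hC.preimage ?_)
    have := uvec_cont b (1 : Equiv.Perm (Fin n))
    simpa [permAct_one] using this
  have hU1 : uvec b 1 ∈ C := ⟨uvec_nonneg b zero_le_one,
    fun g _ => lexGe_perm_diff l hord _ (uvec_one_dec b) g⟩
  have hT1 : (1:ℝ) ∈ T := ⟨⟨zero_le_one, le_refl 1⟩, hU1⟩
  have hTbdd : BddBelow T := ⟨0, fun t ht => ht.1.1⟩
  set ts := sInf T with hts
  have htsT : ts ∈ T := hTclosed.csInf_mem ⟨1, hT1⟩ hTbdd
  have hu0 : uvec b 0 ∉ C := by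
    intro hmem
    have hlex := hmem.2 k₀⁻¹ (inv_mem hk₀G)
    have heq : (fun k => l k (uvec b 0 - permAct k₀⁻¹ (uvec b 0))) =
        fun k => - ((1/2) * l k (Pi.single a 1 - Pi.single b 1)) := by
      funext k
      rw [uvec_zero_sub hab' k₀ hk₀a, map_smul, smul_eq_mul]
      ring
    rw [heq] at hlex
    exact lexGt_not_neg (lexGt_smul one_half_pos (hord a b hab)) hlex
  have htspos : 0 < ts :=
    lt_of_le_of_ne htsT.1.1 (fun h => hu0 (by rw [h]; exact htsT.2))
  have hopen : ∀ h : Equiv.Perm (Fin n), ∃ δ : ℝ, 0 < δ ∧ (permAct h (uvec b ts) ∉ C →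
      ∀ t : ℝ, |t - ts| < δ → permAct h (uvec b t) ∉ C) := by
    intro h
    by_cases hmem : permAct h (uvec b ts) ∈ C
    · exact ⟨1, one_pos, fun hn => absurd hmem hn⟩
    · have hpre : IsOpen ((fun t => permAct h (uvec b t)) ⁻¹' Cᶜ) :=
        hC.isOpen_compl.preimage (uvec_cont b h)
      have hmem' : ts ∈ (fun t => permAct h (uvec b t)) ⁻¹' Cᶜ := hmem
      obtain ⟨δ, hδpos, hball⟩ := Metric.isOpen_iff.mp hpre ts hmem'
      refine ⟨δ, hδpos, fun _ t ht => ?_⟩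
      have hmb : t ∈ Metric.ball ts δ := by rwa [Metric.mem_ball, Real.dist_eq]
      exact hball hmb
  choose δ hδpos hδspec using hopen
  have hPne : (Finset.univ : Finset (Equiv.Perm (Fin n))).Nonempty := Finset.univ_nonempty
  set δ0 := Finset.univ.inf' hPne δ with hδ0
  have hδ0pos : 0 < δ0 := (Finset.lt_inf'_iff hPne).mpr fun h _ => hδpos h
  set ε := min (δ0 / 2) (ts / 2) with hε
  have hεpos : 0 < ε := lt_min (by linarith) (by linarith)
  have hεle1 : ε ≤ δ0 / 2 := min_le_left _ _
  have hεle2 : ε ≤ ts / 2 := min_le_right _ _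
  set t1 := ts - ε with ht1def
  have ht1pos : 0 < t1 := by rw [ht1def]; linarith
  have ht1lt : t1 < ts := by rw [ht1def]; linarith
  have hts1 : ts ≤ 1 := htsT.1.2
  have ht1mem : uvec b t1 ∉ C := by
    intro hmem
    have hmemT : t1 ∈ T := ⟨⟨ht1pos.le, by linarith⟩, hmem⟩
    have hle : ts ≤ t1 := csInf_le hTbdd hmemT
    linarith
  obtain ⟨h, hhG, hhC⟩ := exists_rep G l (uvec b t1) (uvec_nonneg b ht1pos.le)
  have hdist : |t1 - ts| < δ0 := by
    have heq2 : t1 - ts = -ε := by rw [ht1def]; ring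
    rw [heq2, abs_neg, abs_of_pos hεpos]
    linarith
  have hhstar : permAct h (uvec b ts) ∈ C := by
    by_contra hns
    exact hδspec h hns t1 (lt_of_lt_of_le hdist (Finset.inf'_le _ (Finset.mem_univ h))) hhC
  have hfix : permAct h (uvec b ts) = uvec b ts :=
    rep_unique hli htsT.2 hhG hhstar
  have hne1 : h ≠ 1 := by
    rintro rfl
    rw [permAct_one] at hhC
    exact ht1mem hhC
  have hfix' : ∀ x, uvec b ts (h x) = uvec b ts x := by
    intro x
    have hcf := congrFun hfix (h x)
    simp only [permAct, Equiv.Perm.inv_def, Equiv.symm_apply_apply] at hcf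
    exact hcf.symm
  have hbmoved : h b ≠ b := by
    intro hhb
    obtain ⟨x0, hx0⟩ : ∃ x, h x ≠ x := by
      by_contra hall
      push_neg at hall
      exact hne1 (Equiv.ext hall)
    rcases uvec_collide htspos (hfix' x0) hx0 with h1 | h1
    · have hx0b : x0 = b := h.injective (h1.trans hhb.symm)
      exact hx0 (by rw [hx0b]; exact hhb)
    · exact hx0 (by rw [h1]; exact hhb)
  set j0 := h b with hj0def
  have hj0b : j0 ≠ b := hbmoved
  have hj0lt : j0 < b := uvec_b_lt htspos hj0b (hfix' b)
  have hhj0 : h j0 = b := by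
    have hj0moved : h j0 ≠ j0 := fun hh => hbmoved (h.injective hh)
    rcases uvec_collide htspos (hfix' j0) hj0moved with h1 | h1
    · exact h1
    · exact absurd h1 hj0b
  have hswbj : h = Equiv.swap b j0 := by
    apply Equiv.ext
    intro x
    rcases eq_or_ne x b with rfl | hxb
    · rw [Equiv.swap_apply_left]
    rcases eq_or_ne x j0 with rfl | hxj
    · rw [Equiv.swap_apply_right]; exact hhj0
    · rw [Equiv.swap_apply_of_ne_of_ne hxb hxj]
      by_contra hmoved
      rcases uvec_collide htspos (hfix' x) hmoved with h1 | h1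
      · exact hxj (h.injective (h1.trans hhj0.symm))
      · exact hxb h1
  have haj0 : a ≠ j0 := by
    intro heq
    apply hswab
    rw [heq, Equiv.swap_comm j0 b, ← hswbj]
    exact hhG
  have hswaj0 : Equiv.swap a j0 ∉ G := by
    intro hmem
    apply hswab
    have hkey : Equiv.swap j0 b * Equiv.swap a j0 * Equiv.swap j0 b = Equiv.swap b a :=
      Equiv.swap_mul_swap_mul_swap haj0 (ne_of_lt hab)
    have hhG' : Equiv.swap j0 b ∈ G := by
      rw [Equiv.swap_comm j0 b]
      rw [← hswbj]
      exact hhG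
    rw [Equiv.swap_comm, ← hkey]
    exact mul_mem (mul_mem hhG' hmem) hhG'
  have horb : (h * k₀) a = j0 := by
    rw [Equiv.Perm.mul_apply, hk₀a]
  rcases lt_or_gt_of_ne haj0 with hlt | hlt
  · have hval : (j0 : ℕ) < Nat.find hQ := hj0lt
    exact Nat.find_min hQ hval
      ⟨j0.isLt, a, hlt, ⟨h * k₀, mul_mem hhG hk₀G, horb⟩, hswaj0⟩
  · have hval : (a : ℕ) < Nat.find hQ := hab
    have hinv : (h * k₀)⁻¹ j0 = a := by simp [← horb]
    exact Nat.find_min hQ hval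
      ⟨a.isLt, j0, hlt, ⟨(h * k₀)⁻¹, inv_mem (mul_mem hhG hk₀G), hinv⟩,
        by rw [Equiv.swap_comm]; exact hswaj0⟩
end
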